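/- There exists a constant K > 0 such that for every n ≥ 2, if B₁,…,Bₙ are closed disks (closed balls in ℝ²) with radii r₁,…,rₙ > 0, contained in the unit square U = [0,1]², with pairwise disjoint interiors, and each Bᵢ intersects the frontier of U, then ∑ᵢ rᵢ ≤ K · log n. (Upper bound part of Theorem 1: the total perimeter of n disjoint disks in the unit square that touch its boundary is O(log n).) -/

import Mathlib

/-!
A disk in the square that meets its boundary is tangent to one of the four sides. Two disks
with disjoint interiors, tangent to the same side and of radii `ρ, σ ≥ t`, touch it at points
at distance `≥ 2√(ρσ) ≥ 2t`, and these points lie in a segment of length `1 - 2t`; so at most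
`1 / (2t)` disks tangent to a given side have radius `≥ t`. Hence the `k`-th largest of their
radii is at most `1 / (2k)`, each side contributes at most `H_n / 2`, and the total is at most
`2 H_n ≤ 2 (1 + log n)`.
-/

open MeasureTheory Metric Set

/-- The unit square `[0,1]² ⊆ ℝ²`. -/
def unitSquare : Set (EuclideanSpace ℝ (Fin 2)) :=
  {p | p 0 ∈ Set.Icc (0 : ℝ) 1 ∧ p 1 ∈ Set.Icc (0 : ℝ) 1}

open Finset

theorem Finset.sum_le_sum_sum_filter {ι κ M : Type*} [AddCommMonoid M] [PartialOrder M]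
    [IsOrderedAddMonoid M] {s : Finset ι} {t : Finset κ} {f : ι → M} (hf : ∀ i ∈ s, 0 ≤ f i)
    {P : κ → ι → Prop} [∀ k, DecidablePred (P k)] (hP : ∀ i ∈ s, ∃ k ∈ t, P k i) :
    ∑ i ∈ s, f i ≤ ∑ k ∈ t, ∑ i ∈ s with P k i, f i := by
  classical
  calc ∑ i ∈ s, f i ≤ ∑ i ∈ s, ∑ k ∈ t with P k i, f i := sum_le_sum fun i hi => by
        obtain ⟨k, hk, hPk⟩ := hP i hi
        exact single_le_sum (f := fun _ => f i) (fun _ _ => hf i hi) (mem_filter.2 ⟨hk, hPk⟩)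
    _ = ∑ k ∈ t, ∑ i ∈ s with P k i, f i := sum_comm' (by simp only [mem_filter]; tauto)

theorem harmonic_mono : Monotone harmonic :=
  monotone_nat_of_le_succ fun n => by rw [harmonic_succ]; exact le_add_of_nonneg_right (by positivity)

theorem sum_le_mul_harmonic_of_card_filter_le {ι : Type*} (S : Finset ι) {c : ι → ℝ} {C : ℝ}
    (hc : ∀ i ∈ S, 0 < c i) (hcount : ∀ t > 0, (#{i ∈ S | t ≤ c i} : ℝ) ≤ C / t) :
    ∑ i ∈ S, c i ≤ C * harmonic #S := by
  classical
  induction S using Finset.induction_on_min_value c with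
  | empty => simp
  | insert a s has hmin ih =>
    have hca : 0 < c a := hc a (mem_insert_self a s)
    have hfilter : {i ∈ insert a s | c a ≤ c i} = insert a s :=
      filter_true_of_mem fun i hi => (mem_insert.1 hi).elim (fun h => h ▸ le_rfl) (hmin i)
    have ha : c a ≤ C / (#s + 1) := by
      have := hcount (c a) hca
      rw [hfilter, card_insert_of_notMem has, le_div_iff₀ hca] at this
      rw [le_div_iff₀ (by positivity)]; push_cast at this; linarith
    have hs : ∑ i ∈ s, c i ≤ C * harmonic #s :=
      ih (fun i hi => hc i (mem_insert_of_mem hi)) fun t ht =>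
        le_trans (by exact_mod_cast Finset.card_le_card (filter_subset_filter _ (subset_insert a s)))
          (hcount t ht)
    rw [sum_insert has, card_insert_of_notMem has, harmonic_succ]
    push_cast
    rw [mul_add, ← div_eq_mul_inv]
    linarith

theorem card_mul_le_of_pairwise_le_abs_sub {ι : Type*} {T : Finset ι} (hT : T.Nonempty)
    {y : ι → ℝ} {u v ε : ℝ} (hε : 0 ≤ ε) (hy : ∀ i ∈ T, y i ∈ Icc u v)
    (hsep : (T : Set ι).Pairwise fun i j => ε ≤ |y i - y j|) :
    #T * ε ≤ v - u + ε := by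
  have hdisj : (T : Set ι).PairwiseDisjoint fun i => ball (y i) (ε / 2) :=
    fun i hi j hj hij => ball_disjoint_ball (by rw [Real.dist_eq]; linarith [hsep hi hj hij])
  have hsub : ⋃ i ∈ T, ball (y i) (ε / 2) ⊆ Icc (u - ε / 2) (v + ε / 2) :=
    iUnion₂_subset fun i hi p hp => by
      rw [Real.ball_eq_Ioo] at hp
      exact ⟨by linarith [hp.1, (hy i hi).1], by linarith [hp.2, (hy i hi).2]⟩
  have hvol := measure_mono (μ := volume) hsub
  rw [measure_biUnion_finset hdisj fun _ _ => measurableSet_ball] at hvol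
  obtain ⟨i, hi⟩ := hT
  have huv : u ≤ v := (hy i hi).1.trans (hy i hi).2
  simp only [Real.volume_ball, Real.volume_Icc, sum_const, nsmul_eq_mul] at hvol
  rw [← ENNReal.ofReal_natCast, ← ENNReal.ofReal_mul (by positivity),
    ENNReal.ofReal_le_ofReal_iff (by linarith)] at hvol
  linarith

theorem EuclideanSpace.dist_sq_eq_fin_two (p q : EuclideanSpace ℝ (Fin 2)) (a : Fin 2) :
    dist p q ^ 2 = (p a - q a) ^ 2 + (p a.rev - q a.rev) ^ 2 := by
  rw [EuclideanSpace.dist_eq, Real.sq_sqrt (by positivity), Fin.sum_univ_two]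
  fin_cases a <;> simp [Real.dist_eq, sq_abs, add_comm]

theorem four_mul_le_sq_sub_of_disjoint_ball {x y : EuclideanSpace ℝ (Fin 2)} {r s : ℝ}
    (hr : 0 < r) (hs : 0 < s) (h : Disjoint (ball x r) (ball y s)) {a : Fin 2}
    (ha : |x a - y a| = |r - s|) : 4 * r * s ≤ (x a.rev - y a.rev) ^ 2 := by
  have hdist : r + s ≤ dist x y := (disjoint_ball_ball_iff hr hs).1 h
  have hsq := EuclideanSpace.dist_sq_eq_fin_two x y a
  have ha' : (x a - y a) ^ 2 = (r - s) ^ 2 := sq_eq_sq_iff_abs_eq_abs _ _ |>.2 ha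
  nlinarith

theorem mem_unitSquare_iff {p : EuclideanSpace ℝ (Fin 2)} :
    p ∈ unitSquare ↔ ∀ a, p a ∈ Icc (0 : ℝ) 1 := by
  simp [unitSquare, Fin.forall_fin_two]

theorem le_apply_and_apply_le_of_closedBall_subset_unitSquare {x : EuclideanSpace ℝ (Fin 2)}
    {r : ℝ} (hr : 0 ≤ r) (hsub : closedBall x r ⊆ unitSquare) (a : Fin 2) :
    r ≤ x a ∧ x a ≤ 1 - r := by
  have hsingle : ‖EuclideanSpace.single a r‖ = r := by simp [abs_of_nonneg hr]
  have hleft := mem_unitSquare_iff.1 (hsub (a := x - EuclideanSpace.single a r)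
    (by simp [hsingle])) a
  have hright := mem_unitSquare_iff.1 (hsub (a := x + EuclideanSpace.single a r)
    (by simp [hsingle])) a
  simp only [PiLp.sub_apply, PiLp.add_apply, PiLp.single_eq_same, Set.mem_Icc] at hleft hright
  constructor <;> linarith [hleft.1, hright.2]

/-- The `a`-coordinate of the centre of a disk of radius `ρ` tangent to the side `{p | p a = 0}`
(for `false`) or `{p | p a = 1}` (for `true`) of the unit square. -/
def tangentCenterCoord : Bool → ℝ → ℝ
  | false, ρ => ρ
  | true, ρ => 1 - ρ

theorem abs_tangentCenterCoord_sub (h : Bool) (ρ σ : ℝ) :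
    |tangentCenterCoord h ρ - tangentCenterCoord h σ| = |ρ - σ| := by
  cases h
  · rfl
  · rw [tangentCenterCoord, tangentCenterCoord, sub_sub_sub_cancel_left, abs_sub_comm]

theorem exists_apply_eq_tangentCenterCoord {x : EuclideanSpace ℝ (Fin 2)} {r : ℝ}
    (hsub : closedBall x r ⊆ unitSquare) (hfr : (closedBall x r ∩ frontier unitSquare).Nonempty) :
    ∃ a h, x a = tangentCenterCoord h r := by
  obtain ⟨q, hq, hqfr⟩ := hfr
  by_contra! hne
  have hopen : IsOpen {p : EuclideanSpace ℝ (Fin 2) | ∀ a, p a ∈ Ioo (0 : ℝ) 1} := by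
    simp only [ofPred_forall]
    exact isOpen_iInter_of_finite fun a => isOpen_Ioo.preimage (PiLp.continuous_apply 2 _ a)
  have hint : {p : EuclideanSpace ℝ (Fin 2) | ∀ a, p a ∈ Ioo (0 : ℝ) 1} ⊆ interior unitSquare :=
    interior_maximal (fun p hp => mem_unitSquare_iff.2 fun a => Ioo_subset_Icc_self (hp a)) hopen
  refine hqfr.2 (hint fun a => ?_)
  have hr : 0 ≤ r := nonempty_closedBall.1 ⟨q, hq⟩
  obtain ⟨hlow, hhigh⟩ := le_apply_and_apply_le_of_closedBall_subset_unitSquare hr hsub a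
  have hlow' : r < x a := lt_of_le_of_ne hlow (hne a false).symm
  have hhigh' : x a < 1 - r := lt_of_le_of_ne hhigh (hne a true)
  have hqa : |q a - x a| ≤ r := by
    simpa only [Real.dist_eq] using (PiLp.dist_apply_le q x a).trans (mem_closedBall.1 hq)
  rw [abs_le] at hqa
  constructor <;> linarith [hqa.1, hqa.2]

section Tangent

variable {ι : Type*} {x : ι → EuclideanSpace ℝ (Fin 2)} {r : ι → ℝ} {S : Finset ι}

theorem card_filter_le_of_tangent (hsub : ∀ i ∈ S, closedBall (x i) (r i) ⊆ unitSquare)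
    (hdisj : (S : Set ι).Pairwise fun i j => Disjoint (ball (x i) (r i)) (ball (x j) (r j)))
    {a : Fin 2} {h : Bool} (htan : ∀ i ∈ S, x i a = tangentCenterCoord h (r i))
    {t : ℝ} (ht : 0 < t) : (#{i ∈ S | t ≤ r i} : ℝ) ≤ 1 / 2 / t := by
  set T := {i ∈ S | t ≤ r i}
  rcases T.eq_empty_or_nonempty with hT | hT
  · rw [hT, Finset.card_empty, Nat.cast_zero]
    positivity
  have hcoord : ∀ i ∈ T, x i a.rev ∈ Icc t (1 - t) := fun i hi => by
    obtain ⟨hiS, hti⟩ := mem_filter.1 hi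
    obtain ⟨hlow, hhigh⟩ :=
      le_apply_and_apply_le_of_closedBall_subset_unitSquare (ht.trans_le hti).le (hsub i hiS) a.rev
    exact ⟨hti.trans hlow, by linarith⟩
  have hsep : (T : Set ι).Pairwise fun i j => 2 * t ≤ |x i a.rev - x j a.rev| :=
    fun i hi j hj hij => by
      obtain ⟨hiS, hti⟩ := mem_filter.1 hi
      obtain ⟨hjS, htj⟩ := mem_filter.1 hj
      have hsq := four_mul_le_sq_sub_of_disjoint_ball (ht.trans_le hti) (ht.trans_le htj)
        (hdisj hiS hjS hij) (a := a) (by rw [htan i hiS, htan j hjS, abs_tangentCenterCoord_sub])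
      rw [← sq_le_sq₀ (by positivity) (abs_nonneg _), sq_abs]
      nlinarith
  have hpack := card_mul_le_of_pairwise_le_abs_sub hT (by positivity) hcoord hsep
  rw [le_div_iff₀ ht]
  linarith

theorem sum_le_harmonic_of_tangent (hr : ∀ i ∈ S, 0 < r i)
    (hsub : ∀ i ∈ S, closedBall (x i) (r i) ⊆ unitSquare)
    (hdisj : (S : Set ι).Pairwise fun i j => Disjoint (ball (x i) (r i)) (ball (x j) (r j)))
    {a : Fin 2} {h : Bool} (htan : ∀ i ∈ S, x i a = tangentCenterCoord h (r i)) :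
    ∑ i ∈ S, r i ≤ harmonic #S / 2 := by
  have := sum_le_mul_harmonic_of_card_filter_le S hr fun t ht =>
    card_filter_le_of_tangent hsub hdisj htan ht
  linarith

end Tangent

theorem disks_touching_square_boundary_log_bound :
    ∃ K : ℝ, 0 < K ∧ ∀ n : ℕ, 2 ≤ n →
      ∀ (x : Fin n → EuclideanSpace ℝ (Fin 2)) (r : Fin n → ℝ),
        (∀ i, 0 < r i) →
        (∀ i, closedBall (x i) (r i) ⊆ unitSquare) →
        (∀ i j, i ≠ j →
          Disjoint (interior (closedBall (x i) (r i)))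
                   (interior (closedBall (x j) (r j)))) →
        (∀ i, (closedBall (x i) (r i) ∩ frontier unitSquare).Nonempty) →
        ∑ i, r i ≤ K * Real.log n := by
  refine ⟨5, by norm_num, fun n hn x r hr hsub hdisj hfr => ?_⟩
  have hball : (univ : Set (Fin n)).Pairwise fun i j =>
      Disjoint (ball (x i) (r i)) (ball (x j) (r j)) := fun i _ j _ hij => by
    simpa only [interior_closedBall'] using hdisj i j hij
  have hside (s : Fin 2 × Bool) :
      ∑ i with x i s.1 = tangentCenterCoord s.2 (r i), r i ≤ (1 + Real.log n) / 2 := by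
    refine (sum_le_harmonic_of_tangent (fun i _ => hr i) (fun i _ => hsub i)
      (hball.mono (Set.subset_univ _)) fun i hi => (mem_filter.1 hi).2).trans ?_
    gcongr
    exact (Rat.cast_le.2 (harmonic_mono (card_le_univ _)) |>.trans_eq (by simp)).trans
      (harmonic_le_one_add_log n)
  have hlog : Real.log 2 ≤ Real.log n := Real.log_le_log two_pos (by exact_mod_cast hn)
  calc ∑ i, r i ≤ ∑ s : Fin 2 × Bool, ∑ i with x i s.1 = tangentCenterCoord s.2 (r i), r i :=
        sum_le_sum_sum_filter (fun i _ => (hr i).le) fun i _ =>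
          (exists_apply_eq_tangentCenterCoord (hsub i) (hfr i)).elim fun a ⟨h, hah⟩ =>
            ⟨(a, h), mem_univ _, hah⟩
    _ ≤ ∑ _s : Fin 2 × Bool, (1 + Real.log n) / 2 := sum_le_sum fun s _ => hside s
    _ = 2 * (1 + Real.log n) := by
      simp only [sum_const, card_univ, Fintype.card_prod, Fintype.card_fin, Fintype.card_bool,
        nsmul_eq_mul]
      ring
    _ ≤ 5 * Real.log n := by linarith [Real.log_two_gt_d9]
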